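/- There exists a plain interpretation of primal infon logic P: an infon algebra and evaluation v such that v is injective on infons and the closure of any deductively closed set of infon-values contains no values of infons outside it. In particular, one can take v(φ) to be (an encoding of) the syntax tree of φ, with π and enc given by syntactic formula constructors. -/

import Mathlib

/-- Infons: formulas built from atoms, ⊤, ⊥, conjunction and primal implication. -/
inductive Infon : Type
  | atom : ℕ → Infon
  | top : Infon
  | bot : Infon
  | and : Infon → Infon → Infon
  | imp : Infon → Infon → Infon
deriving DecidableEq

/-- Derivability in the basic primal infon logic P (⊥ is an ordinary atom, no rule for it). -/
inductive DerP : Set Infon → Infon → Prop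
  | top (Γ : Set Infon) : DerP Γ .top
  | id (φ : Infon) : DerP {φ} φ
  | weak {Γ φ} (Δ : Set Infon) : DerP Γ φ → DerP (Γ ∪ Δ) φ
  | cut {Γ φ ψ} : DerP Γ φ → DerP (insert φ Γ) ψ → DerP Γ ψ
  | andI {Γ φ ψ} : DerP Γ φ → DerP Γ ψ → DerP Γ (.and φ ψ)
  | andE1 {Γ φ ψ} : DerP Γ (.and φ ψ) → DerP Γ φ
  | andE2 {Γ φ ψ} : DerP Γ (.and φ ψ) → DerP Γ ψ
  | impI {Γ ψ} (φ : Infon) : DerP Γ ψ → DerP Γ (.imp φ ψ)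
  | impE {Γ φ ψ} : DerP Γ φ → DerP Γ (.imp φ ψ) → DerP Γ ψ

/-- Derivability in P[⊥_w]: P plus the weak ⊥-elimination rule. -/
inductive DerW : Set Infon → Infon → Prop
  | top (Γ : Set Infon) : DerW Γ .top
  | id (φ : Infon) : DerW {φ} φ
  | weak {Γ φ} (Δ : Set Infon) : DerW Γ φ → DerW (Γ ∪ Δ) φ
  | cut {Γ φ ψ} : DerW Γ φ → DerW (insert φ Γ) ψ → DerW Γ ψ
  | andI {Γ φ ψ} : DerW Γ φ → DerW Γ ψ → DerW Γ (.and φ ψ)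
  | andE1 {Γ φ ψ} : DerW Γ (.and φ ψ) → DerW Γ φ
  | andE2 {Γ φ ψ} : DerW Γ (.and φ ψ) → DerW Γ ψ
  | impI {Γ ψ} (φ : Infon) : DerW Γ ψ → DerW Γ (.imp φ ψ)
  | impE {Γ φ ψ} : DerW Γ φ → DerW Γ (.imp φ ψ) → DerW Γ ψ
  | botEw {Γ φ ψ} : DerW Γ .bot → DerW Γ (.imp φ ψ) → DerW Γ ψ

/-- Positive atoms of an infon. -/
def posAt : Infon → Set Infon
  | .and φ ψ => posAt φ ∪ posAt ψ
  | .imp _ ψ => posAt ψ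
  | φ => {φ}

/-- Positive atoms of a context. -/
def posCtx (Γ : Set Infon) : Set Infon := ⋃ φ ∈ Γ, posAt φ

/-- Binary strings Σ* over Σ = {0,1}. -/
abbrev Str := List Bool

/-- A cryptographic infon algebra over binary strings: pairing with (partial) projections,
total encryption with (partial) decryption, and a nonempty public set E. -/
structure InfonAlgebra where
  pi : Str → Str → Str
  l : Str → Option Str
  r : Str → Option Str
  enc : Str → Str → Str
  dec : Str → Str → Option Str
  E : Set Str
  E_nonempty : E.Nonempty
  l_pi : ∀ x y, l (pi x y) = some x
  r_pi : ∀ x y, r (pi x y) = some y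
  dec_enc : ∀ x y, dec x (enc x y) = some y

/-- M ⊆ Σ* is closed (w.r.t. an infon algebra A). -/
def ClosedInfoSet (A : InfonAlgebra) (M : Set Str) : Prop :=
  A.E ⊆ M ∧
  (∀ a b, (a ∈ M ∧ b ∈ M) ↔ A.pi a b ∈ M) ∧
  (∀ a b, a ∈ M → A.enc a b ∈ M → b ∈ M) ∧
  (∀ a b, b ∈ M → A.enc a b ∈ M)

/-- An interpretation: an evaluation of infons by strings, commuting with the connectives
(∧ goes to pairing, primal → goes to encryption), with v(⊤) ∈ E. -/
structure Interp (A : InfonAlgebra) where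
  v : Infon → Str
  v_top : v .top ∈ A.E
  v_and : ∀ φ ψ, v (.and φ ψ) = A.pi (v φ) (v ψ)
  v_imp : ∀ φ ψ, v (.imp φ ψ) = A.enc (v φ) (v ψ)

/-- The closure of a set of strings: the least closed superset. -/
def closureA (A : InfonAlgebra) (M₀ : Set Str) : Set Str :=
  ⋂₀ {M | ClosedInfoSet A M ∧ M₀ ⊆ M}

/-- A set of infons is deductively closed if it is closed under derivability in P. -/
def DedClosed (T : Set Infon) : Prop := ∀ ψ, DerP T ψ → ψ ∈ T

/-- A plain interpretation: v is injective, and the closure of (the set of values of) any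
deductively closed set of infons contains no new values of infons. -/
def Plain (A : InfonAlgebra) (I : Interp A) : Prop :=
  Function.Injective I.v ∧
  ∀ T : Set Infon, DedClosed T →
    ∀ φ : Infon, I.v φ ∈ closureA A (I.v '' T) → I.v φ ∈ I.v '' T

/-!
Identify `Σ*` with the set of infons by a bijection (both are countably infinite) and let
`π` and `enc` be the formula constructors `∧` and `→`, so that `v` is that bijection read
backwards. The closure conditions on a set of strings then become, on the corresponding set of
infons, exactly ∧-introduction and elimination, →-elimination, and →-introduction of a
derivable conclusion. A deductively closed set of infons satisfies them, so its image under `v`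
is already closed and is its own closure.
-/

namespace Infon

def code : Infon → ℕ
  | atom k => Nat.pair 0 k
  | top => Nat.pair 1 0
  | bot => Nat.pair 2 0
  | and φ ψ => Nat.pair 3 (Nat.pair φ.code ψ.code)
  | imp φ ψ => Nat.pair 4 (Nat.pair φ.code ψ.code)

theorem code_injective : Function.Injective code := by
  intro φ ψ h
  induction φ generalizing ψ with
  | atom _ | top | bot => cases ψ <;> simp_all [code, Nat.pair_eq_pair]
  | and φ₁ φ₂ ih₁ ih₂ | imp φ₁ φ₂ ih₁ ih₂ =>
    cases ψ <;> simp [code, Nat.pair_eq_pair] at h ⊢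
    all_goals exact ⟨ih₁ h.1, ih₂ h.2⟩

instance : Countable Infon := code_injective.countable

instance : Infinite Infon := Infinite.of_injective atom fun _ _ => atom.inj

end Infon

theorem DerP.of_mem {Γ : Set Infon} {φ : Infon} (h : φ ∈ Γ) : DerP Γ φ := by
  simpa [Set.insert_eq_of_mem h] using DerP.weak Γ (DerP.id φ)

namespace DedClosed

variable {T : Set Infon} (hT : DedClosed T)
include hT

theorem top_mem : Infon.top ∈ T := hT _ (.top T)

theorem and_mem_iff {φ ψ : Infon} : Infon.and φ ψ ∈ T ↔ φ ∈ T ∧ ψ ∈ T :=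
  ⟨fun h => ⟨hT _ (.andE1 (.of_mem h)), hT _ (.andE2 (.of_mem h))⟩,
    fun h => hT _ (.andI (.of_mem h.1) (.of_mem h.2))⟩

theorem mem_of_imp_mem {φ ψ : Infon} (hφ : φ ∈ T) (h : Infon.imp φ ψ ∈ T) : ψ ∈ T :=
  hT _ (.impE (.of_mem hφ) (.of_mem h))

theorem imp_mem (φ : Infon) {ψ : Infon} (hψ : ψ ∈ T) : Infon.imp φ ψ ∈ T :=
  hT _ (.impI φ (.of_mem hψ))

end DedClosed

theorem closureA_eq_self {A : InfonAlgebra} {M : Set Str} (hM : ClosedInfoSet A M) :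
    closureA A M = M :=
  Set.Subset.antisymm (Set.sInter_subset_of_mem ⟨hM, subset_rfl⟩) (Set.subset_sInter fun _ h => h.2)

section Syntactic

variable (e : Str ≃ Infon)

/-- Strings read as infons through `e`, with pairing and encryption the constructors `∧`, `→`. -/
def syntacticAlgebra : InfonAlgebra where
  pi x y := e.symm (.and (e x) (e y))
  l s := match e s with
    | .and φ _ => some (e.symm φ)
    | _ => none
  r s := match e s with
    | .and _ ψ => some (e.symm ψ)
    | _ => none
  enc x y := e.symm (.imp (e x) (e y))
  dec x s := match e s with
    | .imp φ ψ => if φ = e x then some (e.symm ψ) else none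
    | _ => none
  E := {e.symm .top}
  E_nonempty := Set.singleton_nonempty _
  l_pi x y := by simp
  r_pi x y := by simp
  dec_enc x y := by simp

def syntacticInterp : Interp (syntacticAlgebra e) where
  v := e.symm
  v_top := rfl
  v_and φ ψ := by simp [syntacticAlgebra]
  v_imp φ ψ := by simp [syntacticAlgebra]

theorem closedInfoSet_image_syntacticInterp {T : Set Infon} (hT : DedClosed T) :
    ClosedInfoSet (syntacticAlgebra e) ((syntacticInterp e).v '' T) := by
  simp only [ClosedInfoSet, syntacticAlgebra, syntacticInterp, e.image_symm_eq_preimage,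
    Set.mem_preimage, Equiv.apply_symm_apply, Set.singleton_subset_iff]
  exact ⟨hT.top_mem, fun _ _ => hT.and_mem_iff.symm, fun _ _ => hT.mem_of_imp_mem,
    fun a _ => hT.imp_mem (e a)⟩

end Syntactic

/-- There exists a plain interpretation of primal infon logic P. -/
theorem exists_plain_interpretation :
    ∃ (A : InfonAlgebra) (I : Interp A), Plain A I := by
  obtain ⟨e⟩ := nonempty_equiv_of_countable (α := Str) (β := Infon)
  refine ⟨syntacticAlgebra e, syntacticInterp e, e.symm.injective, fun T hT φ hφ => ?_⟩
  rwa [closureA_eq_self (closedInfoSet_image_syntacticInterp e hT)] at hφ
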